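/- arXiv:2604.24573 — 2 statements merged into one kernel-verified Lean document; each statement's English description precedes it below -/
import Mathlib

section
/- For a permutation w in S_n, if X = [x_1,...,x_k] is a k-quasi-inversion of w (all but exactly one of the pairs [x_i,x_j] with i<j are 2-inversions of w), then the intersection of the packet P(X) with the set of (k-1)-inversions of w equals {X_i, X_{i+1}} for some i in [k-1]. -/
/-- `X` is a `k`-inversion of `w`. -/
def IsKInv (n k : ℕ) (w : Equiv.Perm (Fin n)) (X : Fin k → Fin n) : Prop :=
  StrictMono X ∧ ∀ i j : Fin k, i < j → w⁻¹ (X j) < w⁻¹ (X i)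

/-- `X` is a `k`-quasi-inversion of `w`: all but exactly one of the pairs of its
entries are 2-inversions of `w`. -/
def IsKQuasiInv (n k : ℕ) (w : Equiv.Perm (Fin n)) (X : Fin k → Fin n) : Prop :=
  StrictMono X ∧
    ∃! p : Fin k × Fin k, p.1 < p.2 ∧ ¬ w⁻¹ (X p.2) < w⁻¹ (X p.1)

/-!
Transitivity of `<` forces the unique non-inverted pair `(a, b)` of a quasi-inversion to be
consecutive: otherwise `a < a + 1 < b` and the inverted pairs `(a, a + 1)`, `(a + 1, b)` would
invert `(a, b)`. Deleting the entry at `j` leaves an inversion exactly when every pair avoiding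
`j` is inverted, i.e. when `j ∈ {a, b}`.
-/

variable {n k : ℕ} {w : Equiv.Perm (Fin n)}

theorem isKInv_comp_succAbove_iff {X : Fin (k + 1) → Fin n} (hX : StrictMono X)
    (j : Fin (k + 1)) :
    IsKInv n k w (X ∘ j.succAbove) ↔
      ∀ p q, p < q → p ≠ j → q ≠ j → w⁻¹ (X q) < w⁻¹ (X p) := by
  refine ⟨fun ⟨_, hinv⟩ p q hpq hp hq => ?_,
    fun h => ⟨hX.comp (Fin.strictMono_succAbove j), fun p q hpq => ?_⟩⟩
  · obtain ⟨p, rfl⟩ := Fin.exists_succAbove_eq hp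
    obtain ⟨q, rfl⟩ := Fin.exists_succAbove_eq hq
    exact hinv p q (Fin.succAbove_lt_succAbove_iff.mp hpq)
  · exact h _ _ (Fin.succAbove_lt_succAbove_iff.mpr hpq) (Fin.succAbove_ne j p)
      (Fin.succAbove_ne j q)

theorem IsKQuasiInv.exists_not_inv_iff {X : Fin (k + 1) → Fin n}
    (hX : IsKQuasiInv n (k + 1) w X) :
    ∃ i : Fin k, ∀ p q, p < q →
      (¬ w⁻¹ (X q) < w⁻¹ (X p) ↔ p = i.castSucc ∧ q = i.succ) := by
  obtain ⟨-, ⟨a, b⟩, ⟨hlt, hbad⟩, huniq⟩ := hX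
  have good : ∀ p q, p < q → (p, q) ≠ (a, b) → w⁻¹ (X q) < w⁻¹ (X p) :=
    fun p q hpq hne => not_not.mp fun h => hne (huniq (p, q) ⟨hpq, h⟩)
  have hab : (a : ℕ) < b := hlt
  have hconsec : (b : ℕ) = a + 1 := by
    by_contra hne
    let c : Fin (k + 1) := ⟨a + 1, by omega⟩
    have hac : a < c := Fin.lt_def.mpr (Nat.lt_succ_self a)
    have hcb : c < b := Fin.lt_def.mpr (by simp only [c]; omega)
    exact hbad ((good c b hcb (by simp [Fin.ext_iff, c])).trans
      (good a c hac (by simp [Fin.ext_iff, c]; omega)))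
  let i : Fin k := ⟨a, by omega⟩
  have hia : i.castSucc = a := rfl
  have hib : i.succ = b := Fin.ext hconsec.symm
  refine ⟨i, fun p q hpq => ⟨fun h => ?_, ?_⟩⟩
  · obtain ⟨rfl, rfl⟩ := Prod.ext_iff.mp (huniq (p, q) ⟨hpq, h⟩)
    exact ⟨hia.symm, hib.symm⟩
  · rintro ⟨rfl, rfl⟩
    rwa [hia, hib]

theorem isKInv_comp_succAbove_iff_of_not_inv_iff {X : Fin (k + 1) → Fin n}
    (hX : StrictMono X) {i : Fin k}
    (hbad : ∀ p q, p < q → (¬ w⁻¹ (X q) < w⁻¹ (X p) ↔ p = i.castSucc ∧ q = i.succ))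
    (j : Fin (k + 1)) :
    IsKInv n k w (X ∘ j.succAbove) ↔ j = i.castSucc ∨ j = i.succ := by
  rw [isKInv_comp_succAbove_iff hX]
  refine ⟨fun h => ?_, fun hj p q hpq hp hq => not_not.mp fun h => ?_⟩
  · by_contra! hj
    exact (hbad _ _ Fin.castSucc_lt_succ).mpr ⟨rfl, rfl⟩
      (h _ _ Fin.castSucc_lt_succ hj.1.symm hj.2.symm)
  · obtain ⟨rfl, rfl⟩ := (hbad p q hpq).mp h
    exact hj.elim hp.symm hq.symm

/-- if `X` is a `(k+1)`-quasi-inversion of `w`, then the intersection of the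
packet `P(X)` with `Inv_k(w)` is `{X_i, X_{i+1}}` for some consecutive pair of indices. -/
theorem quasiInv_packet_intersection (n k : ℕ) (w : Equiv.Perm (Fin n))
    (X : Fin (k + 1) → Fin n) (hX : IsKQuasiInv n (k + 1) w X) :
    ∃ i : Fin k,
      {Y | (∃ j : Fin (k + 1), Y = X ∘ Fin.succAbove j) ∧ IsKInv n k w Y}
        = {X ∘ Fin.succAbove i.castSucc, X ∘ Fin.succAbove i.succ} := by
  obtain ⟨i, hbad⟩ := hX.exists_not_inv_iff
  have key := isKInv_comp_succAbove_iff_of_not_inv_iff hX.1 hbad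
  refine ⟨i, Set.ext fun Y => ⟨?_, ?_⟩⟩
  · rintro ⟨⟨j, rfl⟩, hY⟩
    rcases (key j).mp hY with rfl | rfl
    exacts [Or.inl rfl, Or.inr rfl]
  · rintro (rfl | rfl)
    exacts [⟨⟨_, rfl⟩, (key _).mpr (Or.inl rfl)⟩, ⟨⟨_, rfl⟩, (key _).mpr (Or.inr rfl)⟩]
end

section
/- For w in S_n and any (k+1)-inversion X of w, the k+1 elements of the packet P(X) form an antichain in the permanent poset P_w(n,k). -/
/-- The quasi-inversion relations generating the permanent poset `P_w(n,k)`: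
for a `(k+1)`-quasi-inversion `X` with `P(X) ∩ Inv_k(w) = {X_i, X_{i+1}}`
(here `i` is 1-based, encoded by `i : Fin k` with value `i+1`), relate
`X_i < X_{i+1}` when `k - i` is odd and `X_{i+1} < X_i` when `k - i` is even. -/
def QuasiRel (n k : ℕ) (w : Equiv.Perm (Fin n)) (A B : Fin k → Fin n) : Prop :=
  ∃ (X : Fin (k + 1) → Fin n) (i : Fin k),
    IsKQuasiInv n (k + 1) w X ∧
    (∀ j : Fin (k + 1), IsKInv n k w (X ∘ Fin.succAbove j) ↔ (j = i.castSucc ∨ j = i.succ)) ∧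
    ((Odd (k - (i.1 + 1)) ∧ A = X ∘ Fin.succAbove i.castSucc ∧ B = X ∘ Fin.succAbove i.succ) ∨
     (Even (k - (i.1 + 1)) ∧ A = X ∘ Fin.succAbove i.succ ∧ B = X ∘ Fin.succAbove i.castSucc))

theorem Fin.val_succAbove {k : ℕ} (p : Fin (k + 1)) (i : Fin k) :
    (p.succAbove i : ℕ) = if i.1 < p.1 then i.1 else i.1 + 1 := by
  unfold Fin.succAbove
  split_ifs <;> simp_all [Fin.lt_def]

theorem Fin.succAbove_castSucc_eq_succAbove_succ {k : ℕ} {i j : Fin k} (hj : j ≠ i) :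
    i.castSucc.succAbove j = i.succ.succAbove j := by
  rcases hj.lt_or_gt with h | h
  · rw [Fin.succAbove_castSucc_of_lt _ _ h, Fin.succAbove_succ_of_le _ _ h.le]
  · rw [Fin.succAbove_castSucc_of_le _ _ h.le, Fin.succAbove_succ_of_lt _ _ h]

namespace PermanentPoset

variable {n k : ℕ} {w : Equiv.Perm (Fin n)}

def altSum (f : Fin k → ℤ) : ℤ :=
  ∑ j : Fin k, (-1) ^ (k - (j.1 + 1)) * f j

theorem altSum_add (f g : Fin k → ℤ) : altSum (f + g) = altSum f + altSum g := by
  simp only [altSum, Pi.add_apply, mul_add, Finset.sum_add_distrib]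

theorem altSum_sub_of_eq_of_ne {f g : Fin k → ℤ} {i : Fin k} (h : ∀ j, j ≠ i → f j = g j) :
    altSum f - altSum g = (-1) ^ (k - (i.1 + 1)) * (f i - g i) := by
  rw [altSum, altSum, ← Finset.sum_sub_distrib, Finset.sum_eq_single i]
  · ring
  · intro j _ hj
    rw [h j hj, sub_self]
  · exact fun hi => absurd (Finset.mem_univ i) hi

def MonotoneOnNoninversions (w : Equiv.Perm (Fin n)) (φ : Fin n → ℤ) : Prop :=
  ∀ ⦃x y⦄, x < y → w⁻¹ x < w⁻¹ y → φ x ≤ φ y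

theorem eq_or_eq_of_isKInv_comp_succAbove {m : ℕ} {X : Fin (m + 1) → Fin n} {a b c : Fin (m + 1)}
    (hab : a < b) (hba : ¬ w⁻¹ (X b) < w⁻¹ (X a)) (hc : IsKInv n m w (X ∘ c.succAbove)) :
    c = a ∨ c = b := by
  by_contra! hne
  obtain ⟨a', rfl⟩ := Fin.exists_succAbove_eq hne.1.symm
  obtain ⟨b', rfl⟩ := Fin.exists_succAbove_eq hne.2.symm
  exact hba (hc.2 a' b' (Fin.succAbove_lt_succAbove_iff.mp hab))

/-- The two packet elements that are `k`-inversions must omit the two ends of the unique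
non-inverted pair of `X`. -/
theorem IsKQuasiInv.lt_and_inv_lt {X : Fin (k + 1) → Fin n} (hX : IsKQuasiInv n (k + 1) w X)
    {i : Fin k} (h₁ : IsKInv n k w (X ∘ i.castSucc.succAbove))
    (h₂ : IsKInv n k w (X ∘ i.succ.succAbove)) :
    X i.castSucc < X i.succ ∧ w⁻¹ (X i.castSucc) < w⁻¹ (X i.succ) := by
  obtain ⟨⟨a, b⟩, ⟨hab, hba⟩, -⟩ := hX.2
  have ha := eq_or_eq_of_isKInv_comp_succAbove hab hba h₁
  have hb := eq_or_eq_of_isKInv_comp_succAbove hab hba h₂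
  obtain ⟨rfl, rfl⟩ : i.castSucc = a ∧ i.succ = b := by
    simp only [Fin.ext_iff, Fin.lt_def, Fin.val_castSucc, Fin.val_succ] at ha hb hab ⊢
    omega
  refine ⟨hX.1 Fin.castSucc_lt_succ, (not_lt.mp hba).lt_of_ne fun h => ?_⟩
  exact Fin.castSucc_lt_succ.ne (hX.1.injective (w⁻¹.injective h))

theorem altSum_le_of_quasiRel {φ : Fin n → ℤ} (hφ : MonotoneOnNoninversions w φ)
    {A B : Fin k → Fin n} (h : QuasiRel n k w A B) : altSum (φ ∘ A) ≤ altSum (φ ∘ B) := by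
  obtain ⟨X, i, hX, hpacket, hAB⟩ := h
  obtain ⟨hlt, hinv⟩ :=
    IsKQuasiInv.lt_and_inv_lt hX ((hpacket _).2 (Or.inl rfl)) ((hpacket _).2 (Or.inr rfl))
  have hle := hφ hlt hinv
  have hdiff := altSum_sub_of_eq_of_ne (f := φ ∘ X ∘ i.castSucc.succAbove)
    (g := φ ∘ X ∘ i.succ.succAbove) (i := i)
    (fun j hj => by simp only [Function.comp_apply, Fin.succAbove_castSucc_eq_succAbove_succ hj])
  simp only [Function.comp_apply, Fin.succAbove_castSucc_self, Fin.succAbove_succ_self] at hdiff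
  rcases hAB with ⟨hodd, rfl, rfl⟩ | ⟨heven, rfl, rfl⟩
  · rw [hodd.neg_one_pow] at hdiff
    linarith
  · rw [heven.neg_one_pow] at hdiff
    linarith

theorem altSum_le_of_transGen {φ : Fin n → ℤ} (hφ : MonotoneOnNoninversions w φ)
    {A B : Fin k → Fin n} (h : Relation.TransGen (QuasiRel n k w) A B) :
    altSum (φ ∘ A) ≤ altSum (φ ∘ B) := by
  induction h with
  | single h => exact altSum_le_of_quasiRel hφ h
  | tail _ h ih => exact ih.trans (altSum_le_of_quasiRel hφ h)

theorem altSum_eq_of_transGen {φ ψ : Fin n → ℤ} (hφ : MonotoneOnNoninversions w φ)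
    (hψ : MonotoneOnNoninversions w ψ) {A B : Fin k → Fin n} (hA : φ ∘ A + ψ ∘ A = 1)
    (hB : φ ∘ B + ψ ∘ B = 1) (h : Relation.TransGen (QuasiRel n k w) A B) :
    altSum (φ ∘ A) = altSum (φ ∘ B) := by
  have hsum : altSum (φ ∘ A) + altSum (ψ ∘ A) = altSum (φ ∘ B) + altSum (ψ ∘ B) := by
    rw [← altSum_add, ← altSum_add, hA, hB]
  linarith [altSum_le_of_transGen hφ h, altSum_le_of_transGen hψ h]

theorem altSum_threshold_comp_succAbove_eq_of_transGen {X : Fin (k + 1) → Fin n}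
    (hX : IsKInv n (k + 1) w X) (b : Fin (k + 1)) {i j : Fin (k + 1)}
    (h : Relation.TransGen (QuasiRel n k w) (X ∘ i.succAbove) (X ∘ j.succAbove)) :
    altSum ((fun l => if b ≤ l then (1 : ℤ) else 0) ∘ i.succAbove) =
      altSum ((fun l => if b ≤ l then (1 : ℤ) else 0) ∘ j.succAbove) := by
  set φ : Fin n → ℤ := fun x => if X b ≤ x then 1 else 0
  set ψ : Fin n → ℤ := fun x => if w⁻¹ (X b) < w⁻¹ x then 1 else 0
  have hφ : MonotoneOnNoninversions w φ := fun x y hxy _ => by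
    simp only [φ]
    split_ifs with hx hy <;> first | exact absurd (hx.trans hxy.le) hy | omega
  have hψ : MonotoneOnNoninversions w ψ := fun x y _ hxy => by
    simp only [ψ]
    split_ifs with hx hy <;> first | exact absurd (hx.trans hxy) hy | omega
  have hanti : StrictAnti (fun l => w⁻¹ (X l)) := fun l l' h => hX.2 l l' h
  have hφX : φ ∘ X = fun l => if b ≤ l then (1 : ℤ) else 0 := by
    funext l
    simp only [φ, Function.comp_apply, hX.1.le_iff_le]
  have hφψX : φ ∘ X + ψ ∘ X = 1 := by
    funext l
    simp only [φ, ψ, Pi.add_apply, Function.comp_apply, hX.1.le_iff_le, hanti.lt_iff_gt]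
    by_cases hbl : b ≤ l
    · simp [hbl, not_lt.mpr hbl]
    · simp [hbl, not_le.mp hbl]
  rw [← hφX]
  exact altSum_eq_of_transGen hφ hψ (congrArg (· ∘ i.succAbove) hφψX)
    (congrArg (· ∘ j.succAbove) hφψX) h

theorem altSum_threshold_comp_succAbove_ne {a b : Fin (k + 1)} (hab : a < b) :
    altSum ((fun l => if b ≤ l then (1 : ℤ) else 0) ∘ a.succAbove) ≠
      altSum ((fun l => if b ≤ l then (1 : ℤ) else 0) ∘ b.succAbove) := by
  obtain ⟨c, rfl⟩ := Fin.exists_succ_eq.2 (Fin.ne_zero_of_lt hab)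
  rw [← sub_ne_zero, altSum_sub_of_eq_of_ne (i := c)]
  · have hc : a.succAbove c = c.succ := Fin.succAbove_of_le_castSucc _ _ (Fin.le_castSucc_iff.2 hab)
    simp [hc]
  · intro j hj
    rw [Ne, Fin.ext_iff] at hj
    rw [Fin.lt_def, Fin.val_succ] at hab
    simp only [Function.comp_apply, Fin.le_def, Fin.val_succAbove, Fin.val_succ]
    split_ifs <;> omega

end PermanentPoset

/-- for a `(k+1)`-inversion `X` of `w`, the `k+1` elements of the packet
`P(X)` form an antichain in the permanent poset `P_w(n,k)` (whose strict order is the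
transitive closure of the quasi-inversion relations). -/
theorem packet_antichain (n k : ℕ) (w : Equiv.Perm (Fin n))
    (X : Fin (k + 1) → Fin n) (hX : IsKInv n (k + 1) w X) :
    ∀ i j : Fin (k + 1), i ≠ j →
      ¬ Relation.TransGen (QuasiRel n k w) (X ∘ Fin.succAbove i) (X ∘ Fin.succAbove j) := by
  intro i j hij h
  have key := PermanentPoset.altSum_threshold_comp_succAbove_eq_of_transGen hX (max i j) h
  rcases hij.lt_or_gt with hlt | hgt
  · rw [max_eq_right hlt.le] at key
    exact PermanentPoset.altSum_threshold_comp_succAbove_ne hlt key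
  · rw [max_eq_left hgt.le] at key
    exact PermanentPoset.altSum_threshold_comp_succAbove_ne hgt key.symm
end
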